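/- arXiv:1908.08634 — 2 statements merged into one kernel-verified Lean document; each statement's English description precedes it below -/
import Mathlib

section
/- Let (C, ≤) be a complete lattice, G a set of agents, sp : G → (C → C) a family of space functions, and for I ⊆ G let Δ_I be the greatest space function f (pointwise) such that f ≤ sp i pointwise for all i ∈ I. Define the agent projection π_i c := ⨆ {e | sp i e ≤ c}, the join projection π_I c := ⨆ {π_i c | i ∈ I}, and the group projection Π_I c := ⨆ {e | Δ_I e ≤ c}. Then for every c ∈ C: π_I c ≤ Π_I c. -/
/-- A self-map is Scott continuous if it preserves suprema of (nonempty) directed sets. -/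
def ScottCont {C : Type*} [CompleteLattice C] (f : C → C) : Prop :=
  ∀ D : Set C, D.Nonempty → DirectedOn (· ≤ ·) D → f (sSup D) = sSup (f '' D)

/-- A space function: Scott continuous, strict (`f ⊥ = ⊥`), preserves binary joins. -/
def IsSpaceFunction {C : Type*} [CompleteLattice C] (f : C → C) : Prop :=
  ScottCont f ∧ f ⊥ = ⊥ ∧ ∀ a b : C, f (a ⊔ b) = f a ⊔ f b

theorem sSup_setOf_le_anti {α β : Type*} [CompleteLattice α] [Preorder β] {f g : α → β}
    (hfg : f ≤ g) (c : β) : sSup {e | g e ≤ c} ≤ sSup {e | f e ≤ c} :=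
  sSup_le_sSup fun e he => (hfg e).trans he

theorem stmt_16_general {C : Type*} {G : Type*} [CompleteLattice C]
    (sp : G → C → C)
    (Δ : Set G → C → C)
    (hΔ : ∀ I : Set G,
      IsGreatest {f : C → C | IsSpaceFunction f ∧ ∀ i ∈ I, ∀ c : C, f c ≤ sp i c} (Δ I))
    (I : Set G) (c : C) :
    sSup ((fun i : G => sSup {e : C | sp i e ≤ c}) '' I) ≤ sSup {e : C | Δ I e ≤ c} :=
  sSup_le <| Set.forall_mem_image.2 fun i hi => sSup_setOf_le_anti ((hΔ I).1.2 i hi) c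

theorem stmt_16 {C : Type*} {G : Type*} [CompleteLattice C]
    (sp : G → C → C) (hsp : ∀ i : G, IsSpaceFunction (sp i))
    (Δ : Set G → C → C)
    (hΔ : ∀ I : Set G,
      IsGreatest {f : C → C | IsSpaceFunction f ∧ ∀ i ∈ I, ∀ c : C, f c ≤ sp i c} (Δ I))
    (I : Set G) (c : C) :
    sSup ((fun i : G => sSup {e : C | sp i e ≤ c}) '' I) ≤ sSup {e : C | Δ I e ≤ c} :=
  stmt_16_general sp Δ hΔ I c
end

section
/- Let (C, ≤) be a finite complete lattice in which join distributes over arbitrary meets (c ⊔ ⨅ S = ⨅ {c ⊔ e | e ∈ S}), with implication a → c := ⨅ {e | c ≤ a ⊔ e}. Let G be a finite set of agents, sp : G → (C → C) a family of space functions, and for each I ⊆ G let Δ_I be the greatest space function f (pointwise) such that f ≤ sp i pointwise for all i ∈ I. If I = J ∪ K, then for every c ∈ C: Δ_I c = ⨅ {Δ_J a ⊔ Δ_K (a → c) | a ∈ C and a ≤ c}, and also Δ_I c = ⨅ {Δ_J a ⊔ Δ_K (a → c) | a ∈ C}. -/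
def himp' {C : Type*} [CompleteLattice C] (c d : C) : C :=
  sInf {e : C | d ≤ c ⊔ e}

/-!
Distributivity of `⊔` over arbitrary meets makes `C` a coframe, whose difference `c \ a` is
exactly `himp' a c`. The right-hand side `c ↦ ⨅ a, Δ J a ⊔ Δ K (c \ a)` is then a space function
below `Δ J` (take `a = c`) and below `Δ K` (take `a = ⊥`), so it is bounded by `Δ (J ∪ K)`.
Conversely `c ≤ a ⊔ c \ a`, and `Δ (J ∪ K)` preserves joins and lies below `Δ J` and `Δ K`.
Restricting to `a ≤ c` changes nothing, since replacing `a` by `a ⊓ c` keeps `c \ a`.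
-/

section SpaceFunction

variable {C : Type*} [CompleteLattice C] {f : C → C}

lemma monotone_of_map_sup (hsup : ∀ a b, f (a ⊔ b) = f a ⊔ f b) : Monotone f :=
  OrderHomClass.mono (SupHom.mk f hsup)

lemma IsSpaceFunction.monotone (hf : IsSpaceFunction f) : Monotone f :=
  monotone_of_map_sup hf.2.2

lemma Set.Finite.exists_isGreatest_of_directedOn {α : Type*} [Preorder α] {D : Set α}
    (hfin : D.Finite) (hne : D.Nonempty) (hdir : DirectedOn (· ≤ ·) D) :
    ∃ m, IsGreatest D m := by
  have : Nonempty D := hne.to_subtype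
  have : Fintype D := hfin.fintype
  obtain ⟨m, hm⟩ := hdir.directed_val.finset_le Finset.univ
  exact ⟨m, m.2, fun d hd => hm ⟨d, hd⟩ (Finset.mem_univ _)⟩

lemma ScottCont.of_monotone [Finite C] (hf : Monotone f) : ScottCont f := by
  intro D hne hdir
  obtain ⟨m, hm⟩ := D.toFinite.exists_isGreatest_of_directedOn hne hdir
  rw [hm.isLUB.sSup_eq, (hf.map_isGreatest hm).isLUB.sSup_eq]

lemma IsSpaceFunction.of_finite [Finite C] (hbot : f ⊥ = ⊥)
    (hsup : ∀ a b, f (a ⊔ b) = f a ⊔ f b) : IsSpaceFunction f :=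
  ⟨ScottCont.of_monotone (monotone_of_map_sup hsup), hbot, hsup⟩

end SpaceFunction

lemma sup_sdiff_sup_le {α : Type*} [GeneralizedCoheytingAlgebra α] (a b c d : α) :
    (a ⊔ b) \ (c ⊔ d) ≤ a \ c ⊔ b \ d :=
  sdiff_le_iff.2 <| (sup_le_sup le_sup_sdiff le_sup_sdiff).trans_eq (sup_sup_sup_comm _ _ _ _)

section InfConv

variable {C : Type*} [Order.Coframe C] {f g : C → C}

/-- The analogue of infimal convolution, with `⊔` for `+` and `\` for `-`. -/
def infConv (f g : C → C) (c : C) : C :=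
  ⨅ a, f a ⊔ g (c \ a)

lemma infConv_le (f g : C → C) (c a : C) : infConv f g c ≤ f a ⊔ g (c \ a) :=
  iInf_le _ a

lemma infConv_le_left (hg : g ⊥ = ⊥) (c : C) : infConv f g c ≤ f c :=
  (infConv_le f g c c).trans_eq (by rw [sdiff_self, hg, sup_bot_eq])

lemma infConv_le_right (hf : f ⊥ = ⊥) (c : C) : infConv f g c ≤ g c :=
  (infConv_le f g c ⊥).trans_eq (by rw [hf, sdiff_bot, bot_sup_eq])

lemma infConv_mono (hg : Monotone g) : Monotone (infConv f g) :=
  fun _ _ h => iInf_mono fun _ => sup_le_sup_left (hg (sdiff_le_sdiff_right h)) _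

lemma infConv_sup (hf : ∀ a b, f (a ⊔ b) = f a ⊔ f b) (hg : ∀ a b, g (a ⊔ b) = g a ⊔ g b)
    (c d : C) : infConv f g (c ⊔ d) = infConv f g c ⊔ infConv f g d := by
  have hg_mono := monotone_of_map_sup hg
  refine le_antisymm ?_ (sup_le (infConv_mono hg_mono le_sup_left)
    (infConv_mono hg_mono le_sup_right))
  unfold infConv
  rw [iInf_sup_iInf]
  refine le_iInf fun ⟨a, b⟩ => (infConv_le f g _ (a ⊔ b)).trans ?_
  calc f (a ⊔ b) ⊔ g ((c ⊔ d) \ (a ⊔ b))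
      ≤ f a ⊔ f b ⊔ (g (c \ a) ⊔ g (d \ b)) := by
        rw [hf, ← hg]
        exact sup_le_sup_left (hg_mono (sup_sdiff_sup_le c d a b)) _
    _ = f a ⊔ g (c \ a) ⊔ (f b ⊔ g (d \ b)) := sup_sup_sup_comm _ _ _ _

lemma IsSpaceFunction.infConv [Finite C] (hf : IsSpaceFunction f) (hg : IsSpaceFunction g) :
    IsSpaceFunction (infConv f g) :=
  .of_finite (le_bot_iff.1 ((infConv_le_left hg.2.1 ⊥).trans_eq hf.2.1))
    (infConv_sup hf.2.2 hg.2.2)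

lemma biInf_Iic_eq_infConv (hf : Monotone f) (c : C) :
    ⨅ a ∈ Set.Iic c, f a ⊔ g (c \ a) = infConv f g c := by
  refine le_antisymm (le_iInf fun a => ?_) (le_iInf₂ fun a _ => infConv_le f g c a)
  calc ⨅ a ∈ Set.Iic c, f a ⊔ g (c \ a)
      ≤ f (a ⊓ c) ⊔ g (c \ (a ⊓ c)) := iInf₂_le (a ⊓ c) (inf_le_right : a ⊓ c ≤ c)
    _ ≤ f a ⊔ g (c \ a) := by
      rw [sdiff_inf_self_right]
      exact sup_le_sup_right (hf inf_le_left) _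

end InfConv

section DistributedSpace

variable {C G : Type*}

def IsDistributedSpace [CompleteLattice C] (sp : G → C → C) (Δ : Set G → C → C) : Prop :=
  ∀ I : Set G, IsGreatest {f : C → C | IsSpaceFunction f ∧ ∀ i ∈ I, ∀ c, f c ≤ sp i c} (Δ I)

namespace IsDistributedSpace

variable {sp : G → C → C} {Δ : Set G → C → C}

section CompleteLattice

variable [CompleteLattice C]

lemma isSpaceFunction (hΔ : IsDistributedSpace sp Δ) (I : Set G) : IsSpaceFunction (Δ I) :=
  (hΔ I).1.1

lemma le_sp (hΔ : IsDistributedSpace sp Δ) {I : Set G} {i : G} (hi : i ∈ I) (c : C) :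
    Δ I c ≤ sp i c :=
  (hΔ I).1.2 i hi c

lemma le_apply (hΔ : IsDistributedSpace sp Δ) {I : Set G} {f : C → C} (hf : IsSpaceFunction f)
    (hle : ∀ i ∈ I, ∀ c, f c ≤ sp i c) (c : C) : f c ≤ Δ I c :=
  (hΔ I).2 ⟨hf, hle⟩ c

lemma antitone (hΔ : IsDistributedSpace sp Δ) {I I' : Set G} (h : I ⊆ I') (c : C) :
    Δ I' c ≤ Δ I c :=
  hΔ.le_apply (hΔ.isSpaceFunction I') (fun _ hi => hΔ.le_sp (h hi)) c

end CompleteLattice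

theorem apply_union [Order.Coframe C] [Finite C] (hΔ : IsDistributedSpace sp Δ) (J K : Set G) :
    Δ (J ∪ K) = infConv (Δ J) (Δ K) := by
  have hJ := hΔ.isSpaceFunction J
  have hK := hΔ.isSpaceFunction K
  funext c
  refine le_antisymm (le_iInf fun a => ?_) (hΔ.le_apply (hJ.infConv hK) ?_ c)
  · calc Δ (J ∪ K) c ≤ Δ (J ∪ K) (a ⊔ c \ a) := (hΔ.isSpaceFunction _).monotone le_sup_sdiff
      _ = Δ (J ∪ K) a ⊔ Δ (J ∪ K) (c \ a) := (hΔ.isSpaceFunction _).2.2 _ _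
      _ ≤ Δ J a ⊔ Δ K (c \ a) :=
        sup_le_sup (hΔ.antitone Set.subset_union_left _) (hΔ.antitone Set.subset_union_right _)
  · rintro i (hi | hi) d
    · exact (infConv_le_left hK.2.1 d).trans (hΔ.le_sp hi d)
    · exact (infConv_le_right hJ.2.1 d).trans (hΔ.le_sp hi d)

end IsDistributedSpace

end DistributedSpace

theorem stmt_19_general {C : Type*} {G : Type*} [CompleteLattice C] [Finite C]
    (hframe : ∀ (c : C) (S : Set C), c ⊔ sInf S = sInf ((fun e => c ⊔ e) '' S))
    (sp : G → C → C)
    (Δ : Set G → C → C)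
    (hΔ : ∀ I : Set G,
      IsGreatest {f : C → C | IsSpaceFunction f ∧ ∀ i ∈ I, ∀ c : C, f c ≤ sp i c} (Δ I))
    (J K : Set G) (c : C) :
    Δ (J ∪ K) c = sInf {x : C | ∃ a : C, a ≤ c ∧ x = Δ J a ⊔ Δ K (himp' a c)} ∧
    Δ (J ∪ K) c = sInf {x : C | ∃ a : C, x = Δ J a ⊔ Δ K (himp' a c)} := by
  -- the difference `c \ a` of this coframe is `himp' a c` by definition
  let _ : Order.Coframe C := .ofMinimalAxioms ⟨fun a s => by rw [hframe, sInf_image]⟩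
  have hΔ : IsDistributedSpace sp Δ := hΔ
  have hunion : Δ (J ∪ K) c = infConv (Δ J) (Δ K) c := by rw [hΔ.apply_union]
  constructor
  · rw [hunion, ← biInf_Iic_eq_infConv (hΔ.isSpaceFunction J).monotone, ← sInf_image]
    congr 1
    ext x
    constructor <;> rintro ⟨a, ha, rfl⟩ <;> exact ⟨a, ha, rfl⟩
  · rw [hunion, infConv, ← sInf_range]
    congr 1
    ext x
    constructor <;> rintro ⟨a, rfl⟩ <;> exact ⟨a, rfl⟩

theorem stmt_19 {C : Type*} {G : Type*} [CompleteLattice C] [Finite C] [Finite G]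
    (hframe : ∀ (c : C) (S : Set C), c ⊔ sInf S = sInf ((fun e => c ⊔ e) '' S))
    (sp : G → C → C) (hsp : ∀ i : G, IsSpaceFunction (sp i))
    (Δ : Set G → C → C)
    (hΔ : ∀ I : Set G,
      IsGreatest {f : C → C | IsSpaceFunction f ∧ ∀ i ∈ I, ∀ c : C, f c ≤ sp i c} (Δ I))
    (J K : Set G) (c : C) :
    Δ (J ∪ K) c = sInf {x : C | ∃ a : C, a ≤ c ∧ x = Δ J a ⊔ Δ K (himp' a c)} ∧
    Δ (J ∪ K) c = sInf {x : C | ∃ a : C, x = Δ J a ⊔ Δ K (himp' a c)} :=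
  stmt_19_general hframe sp Δ hΔ J K c
end
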